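/- arXiv:1703.05154 — 5 statements merged into one kernel-verified Lean document; each statement's English description precedes it below -/
import Mathlib

section
/- The map f = f₁ ∘ f₂, where f₂(z) = (e^{πz} − 1)/(e^{πz} + 1) and f₁(w) = (1/2)(w + 1/w), is a covering map from ℂ \ iℤ onto ℂ \ {−1, 1}. -/
open Complex

/-- The set `iℤ = {i·m : m ∈ ℤ}` of integer multiples of `i`. -/
def intMulI : Set ℂ := {z : ℂ | ∃ m : ℤ, z = Complex.I * (m : ℂ)}

/-- `f₂(z) = (e^{πz} − 1)/(e^{πz} + 1)`. -/
noncomputable def fTwo (z : ℂ) : ℂ :=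
  (Complex.exp (Real.pi * z) - 1) / (Complex.exp (Real.pi * z) + 1)

/-- `f₁(w) = (1/2)(w + 1/w)`. -/
noncomputable def fOne (w : ℂ) : ℂ := (w + w⁻¹) / 2

/-!
Since `e^{2πz} = (e^{πz})²`, one has `f(z) = M(e^{2πz})` with `M(u) = (u + 1)/(u - 1)`, i.e.
`f(z) = coth(πz)`. The map `z ↦ e^{2πz}` is a covering `ℂ → ℂ \ {0}` whose fibre over `1` is
exactly `iℤ`, so it restricts to a covering `ℂ \ iℤ → ℂ \ {0, 1}`; and `M` is an involution of
`ℂ \ {1}` exchanging `0` and `-1`, hence a homeomorphism `ℂ \ {0, 1} → ℂ \ {-1, 1}`.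
-/

open scoped Real

lemma Set.restrictPreimage_surjective_of_subset_range {α β : Type*} {f : α → β} {t : Set β}
    (h : t ⊆ Set.range f) : Function.Surjective (t.restrictPreimage f) := fun y ↦
  let ⟨x, hx⟩ := h y.2
  ⟨⟨x, by simp [hx]⟩, Subtype.ext hx⟩

noncomputable def mobius (u : ℂ) : ℂ := (u + 1) / (u - 1)

lemma mobius_ne_one (u : ℂ) : mobius u ≠ 1 := by
  rcases eq_or_ne u 1 with rfl | hu
  · norm_num [mobius]
  · rw [mobius, Ne, div_eq_one_iff_eq (sub_ne_zero.mpr hu)]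
    intro h
    exact two_ne_zero (by linear_combination h : (2 : ℂ) = 0)

lemma mobius_eq_neg_one_iff {u : ℂ} : mobius u = -1 ↔ u = 0 := by
  rcases eq_or_ne u 1 with rfl | hu
  · norm_num [mobius]
  · rw [mobius, div_eq_iff (sub_ne_zero.mpr hu)]
    exact ⟨fun h ↦ by linear_combination h / 2, fun h ↦ by linear_combination 2 * h⟩

lemma mobius_mobius {u : ℂ} (hu : u ≠ 1) : mobius (mobius u) = u := by
  have hu' : u - 1 ≠ 0 := sub_ne_zero.mpr hu
  rw [mobius, mobius]
  field_simp
  ring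

lemma continuousOn_mobius : ContinuousOn mobius {1}ᶜ :=
  (continuousOn_id.add continuousOn_const).div (continuousOn_id.sub continuousOn_const)
    fun _ hu ↦ sub_ne_zero.mpr hu

lemma mapsTo_mobius_compl_zero_one : Set.MapsTo mobius {0, 1}ᶜ {-1, 1}ᶜ := by
  intro u hu
  simp only [Set.mem_compl_iff, Set.mem_insert_iff, Set.mem_singleton_iff, not_or,
    mobius_eq_neg_one_iff] at hu ⊢
  exact ⟨hu.1, mobius_ne_one u⟩

lemma mapsTo_mobius_compl_neg_one_one : Set.MapsTo mobius {-1, 1}ᶜ {0, 1}ᶜ := by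
  intro w hw
  simp only [Set.mem_compl_iff, Set.mem_insert_iff, Set.mem_singleton_iff, not_or] at hw ⊢
  refine ⟨fun h ↦ hw.1 ?_, mobius_ne_one w⟩
  rw [← mobius_mobius hw.2, h]
  norm_num [mobius]

noncomputable def mobiusHomeomorph : ({0, 1}ᶜ : Set ℂ) ≃ₜ ({-1, 1}ᶜ : Set ℂ) where
  toFun := mapsTo_mobius_compl_zero_one.restrict
  invFun := mapsTo_mobius_compl_neg_one_one.restrict
  left_inv u := Subtype.ext (mobius_mobius fun h ↦ u.2 (.inr h))
  right_inv w := Subtype.ext (mobius_mobius fun h ↦ w.2 (.inr h))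
  continuous_toFun := (continuousOn_mobius.mono
    (Set.compl_subset_compl.mpr (Set.subset_insert 0 _))).mapsToRestrict _
  continuous_invFun := (continuousOn_mobius.mono
    (Set.compl_subset_compl.mpr (Set.subset_insert (-1) _))).mapsToRestrict _

/-- Both sides vanish on `iℤ`, by the convention `x / 0 = 0`. -/
lemma fOne_fTwo (z : ℂ) : fOne (fTwo z) = mobius (exp (2 * π * z)) := by
  have hsq : exp (2 * π * z) = exp (π * z) ^ 2 := by rw [← Complex.exp_nat_mul]; ring_nf
  rw [fOne, fTwo, mobius, hsq]
  generalize exp (π * z) = v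
  rcases eq_or_ne v 1 with rfl | h1
  · norm_num
  rcases eq_or_ne v (-1) with rfl | h2
  · norm_num
  have h1' : v - 1 ≠ 0 := sub_ne_zero.mpr h1
  have h2' : v + 1 ≠ 0 := fun h ↦ h2 (eq_neg_of_add_eq_zero_left h)
  have h3 : v ^ 2 - 1 ≠ 0 := by
    rw [show v ^ 2 - 1 = (v - 1) * (v + 1) by ring]; exact mul_ne_zero h1' h2'
  field_simp
  ring

lemma exp_two_pi_mul_eq_one_iff {z : ℂ} : exp (2 * π * z) = 1 ↔ z ∈ intMulI := by
  have h2pi : (2 * π : ℂ) ≠ 0 := by simp [Real.pi_ne_zero]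
  rw [Complex.exp_eq_one_iff]
  refine exists_congr fun n ↦ ?_
  rw [show (n : ℂ) * (2 * π * I) = 2 * π * (I * n) by ring, mul_right_inj' h2pi]

lemma preimage_exp_two_pi_mul :
    (fun z : ℂ ↦ exp (2 * π * z)) ⁻¹' {0, 1}ᶜ = intMulIᶜ := by
  ext z
  simp [Complex.exp_ne_zero, exp_two_pi_mul_eq_one_iff]

lemma isCoveringMapOn_exp_two_pi_mul : IsCoveringMapOn (fun z : ℂ ↦ exp (2 * π * z)) {0}ᶜ :=
  isCoveringMapOn_exp.comp_homeomorph (Homeomorph.mulLeft₀ _ (by simp [Real.pi_ne_zero]))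

lemma range_exp_two_pi_mul : Set.range (fun z : ℂ ↦ exp (2 * π * z)) = {0}ᶜ :=
  ((Homeomorph.mulLeft₀ (2 * π : ℂ) (by simp [Real.pi_ne_zero])).surjective.range_comp exp).trans
    range_exp

noncomputable def expTwoPiMul : (intMulIᶜ : Set ℂ) → ({0, 1}ᶜ : Set ℂ) :=
  ({0, 1}ᶜ : Set ℂ).restrictPreimage (fun z : ℂ ↦ exp (2 * π * z)) ∘
    Homeomorph.setCongr preimage_exp_two_pi_mul.symm

lemma compl_zero_one_subset_compl_zero : ({0, 1}ᶜ : Set ℂ) ⊆ {0}ᶜ :=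
  Set.compl_subset_compl.mpr (Set.singleton_subset_iff.mpr (Set.mem_insert 0 _))

lemma isCoveringMap_expTwoPiMul : IsCoveringMap expTwoPiMul :=
  ((isCoveringMapOn_exp_two_pi_mul.mono compl_zero_one_subset_compl_zero
    ).isCoveringMap_restrictPreimage).comp_homeomorph _

lemma surjective_expTwoPiMul : Function.Surjective expTwoPiMul :=
  (Set.restrictPreimage_surjective_of_subset_range
    (range_exp_two_pi_mul ▸ compl_zero_one_subset_compl_zero)).comp
    (Homeomorph.setCongr _).surjective

/-- The map `f = f₁ ∘ f₂` is a covering map from `ℂ \ iℤ` onto `ℂ \ {−1, 1}`. -/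
theorem covering_map_of_log_covering :
    ∃ F : (intMulIᶜ : Set ℂ) → ({-1, 1}ᶜ : Set ℂ),
      (∀ z : (intMulIᶜ : Set ℂ), (F z : ℂ) = fOne (fTwo (z : ℂ))) ∧
      IsCoveringMap F ∧ Function.Surjective F :=
  ⟨mobiusHomeomorph ∘ expTwoPiMul, fun z ↦ (fOne_fTwo z).symm,
    isCoveringMap_expTwoPiMul.homeomorph_comp _,
    mobiusHomeomorph.surjective.comp surjective_expTwoPiMul⟩
end

section
/- Let α₁(t) = −1 + e^{2πit}, t ∈ [0,1], be the loop in ℂ \ {−1,1} based at 0 that surrounds −1 counterclockwise. For every k ∈ ℤ, the unique lift γ of α₁ under the covering map f = f₁ ∘ f₂ with initial point γ(0) = −i/2 + ik satisfies: γ(1) = −i/2 + i(k+1), the image of γ is contained in the closed left half-plane {z : Re z ≤ 0}, and Re γ(t) = 0 only for t = 0 and t = 1. -/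
open Complex unitInterval

/-- The covering map `f = f₁ ∘ f₂` from `ℂ \ iℤ` onto `ℂ \ {−1,1}`. -/
noncomputable def fCov (z : ℂ) : ℂ := fOne (fTwo z)

/-- The loop `α₁(t) = −1 + e^{2πit}` in `ℂ \ {−1,1}` based at `0`,
surrounding `−1` counterclockwise. -/
noncomputable def alphaOne (t : ℝ) : ℂ := -1 + Complex.exp (2 * Real.pi * Complex.I * t)

/-!
With `q = e^{2πz}` one has `f(z) = (q + 1)/(q - 1)`, and `z ∈ iℤ` iff `q = 1`; so `z ∉ iℤ` lies over
`w ≠ 1` iff `e^{2πz} = (w + 1)/(w - 1)`. For `w = α₁(t) = u - 1` with `u = e^{2πit}` the right-hand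
side is `-u/(2 - u)`, and `2 - u` stays in the half-plane `Re ≥ 1`, so
`γ(t) = i(t + k - 1/2) - log(2 - u)/(2π)` is a continuous lift, running from `-i/2 + ik` to
`-i/2 + i(k + 1)`. Its real part `-log|2 - u|/(2π)` is `≤ 0`, and `|2 - u| = 1` on the unit circle
only at `u = 1`. Uniqueness holds because `exp` is a covering map.
-/

open scoped Real

lemma mem_intMulI_iff_exp_eq_one {z : ℂ} : z ∈ intMulI ↔ exp (2 * π * z) = 1 := by
  rw [exp_eq_one_iff]
  constructor
  · rintro ⟨m, rfl⟩
    exact ⟨m, by ring⟩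
  · rintro ⟨m, hm⟩
    refine ⟨m, mul_left_cancel₀ two_pi_I_ne_zero ?_⟩
    linear_combination Complex.I * hm

lemma fCov_eq_of_notMem {z : ℂ} (hz : z ∉ intMulI) :
    fCov z = (exp (2 * π * z) + 1) / (exp (2 * π * z) - 1) := by
  rw [mem_intMulI_iff_exp_eq_one] at hz
  have hsq : exp (2 * π * z) = exp (π * z) ^ 2 := by rw [← exp_nat_mul]; ring_nf
  rw [hsq] at hz ⊢
  have h₁ : exp (π * z) - 1 ≠ 0 := fun h => hz (by linear_combination (exp (π * z) + 1) * h)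
  have h₂ : exp (π * z) + 1 ≠ 0 := fun h => hz (by linear_combination (exp (π * z) - 1) * h)
  have h₃ : exp (π * z) ^ 2 - 1 ≠ 0 := sub_ne_zero.mpr hz
  simp only [fCov, fOne, fTwo]
  field_simp
  ring

lemma fCov_eq_iff {z w : ℂ} (hz : z ∉ intMulI) (hw : w ≠ 1) :
    fCov z = w ↔ exp (2 * π * z) = (w + 1) / (w - 1) := by
  have hq : exp (2 * π * z) - 1 ≠ 0 := sub_ne_zero.mpr (mt mem_intMulI_iff_exp_eq_one.mpr hz)
  rw [fCov_eq_of_notMem hz, div_eq_iff hq, eq_div_iff (sub_ne_zero.mpr hw)]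
  constructor <;> intro h <;> linear_combination -h

lemma notMem_intMulI_of_exp_eq {z w : ℂ} (h : exp (2 * π * z) = (w + 1) / (w - 1)) :
    z ∉ intMulI := by
  rw [mem_intMulI_iff_exp_eq_one, h]
  intro h₁
  have hw : w - 1 ≠ 0 := fun hw => by simp [hw] at h₁
  have : (2 : ℂ) = 0 := by linear_combination (div_eq_one_iff_eq hw).mp h₁
  norm_num at this

lemma eq_of_exp_two_pi_mul_eq {X : Type*} [TopologicalSpace X] [PreconnectedSpace X]
    {g₁ g₂ : X → ℂ} (h₁ : Continuous g₁) (h₂ : Continuous g₂)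
    (he : ∀ x, exp (2 * π * g₁ x) = exp (2 * π * g₂ x)) (x₀ : X) (h₀ : g₁ x₀ = g₂ x₀) :
    g₁ = g₂ := by
  have h := isCoveringMap_exp.eq_of_comp_eq (g₁ := fun x => 2 * π * g₁ x)
    (g₂ := fun x => 2 * π * g₂ x) (by fun_prop) (by fun_prop)
    (funext fun x => Subtype.ext (he x)) x₀ (by rw [h₀])
  funext x
  exact mul_left_cancel₀ (by simp [Real.pi_ne_zero]) (congrFun h x)

lemma re_lt_one_of_norm_le_one {v : ℂ} (hv : ‖v‖ ≤ 1) (h : v ≠ 1) : v.re < 1 := by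
  refine ((re_le_norm v).trans hv).lt_of_ne fun hre => h ?_
  have him : v.im = 0 :=
    abs_re_eq_norm.mp (le_antisymm (abs_re_le_norm v) (by rw [hre, abs_one]; exact hv))
  exact Complex.ext (by simpa using hre) (by simpa using him)

lemma one_le_re_two_sub {v : ℂ} (hv : ‖v‖ ≤ 1) : 1 ≤ (2 - v).re := by
  have := (re_le_norm v).trans hv
  simp only [sub_re, re_ofNat]
  linarith

lemma one_lt_norm_two_sub {v : ℂ} (hv : ‖v‖ ≤ 1) (h : v ≠ 1) : 1 < ‖2 - v‖ := by
  have := re_lt_one_of_norm_le_one hv h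
  calc (1 : ℝ) < (2 - v).re := by simp only [sub_re, re_ofNat]; linarith
    _ ≤ ‖2 - v‖ := re_le_norm _

lemma norm_exp_two_pi_I_mul (t : ℝ) : ‖exp (2 * π * Complex.I * t)‖ = 1 := by
  rw [show 2 * π * Complex.I * t = ((2 * π * t : ℝ) : ℂ) * Complex.I by push_cast; ring]
  exact norm_exp_ofReal_mul_I _

lemma exp_two_pi_I_mul_eq_one_iff {t : ℝ} (ht : t ∈ I) :
    exp (2 * π * Complex.I * t) = 1 ↔ t = 0 ∨ t = 1 := by
  refine ⟨fun h => ?_, ?_⟩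
  · obtain ⟨n, hn⟩ := exp_eq_one_iff.mp h
    have htn : t = n := by
      exact_mod_cast mul_left_cancel₀ two_pi_I_ne_zero (hn.trans (mul_comm _ _))
    subst htn
    have h₀ : (0 : ℤ) ≤ n := by exact_mod_cast ht.1
    have h₁ : n ≤ 1 := by exact_mod_cast ht.2
    interval_cases n <;> simp
  · rintro (rfl | rfl) <;> simp

lemma alphaOne_ne_one (t : ℝ) : alphaOne t ≠ 1 := by
  intro h
  have h2 : exp (2 * π * Complex.I * t) = 2 := by rw [alphaOne] at h; linear_combination h
  have := norm_exp_two_pi_I_mul t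
  norm_num [h2] at this

lemma two_sub_exp_mem_slitPlane (t : ℝ) : 2 - exp (2 * π * Complex.I * t) ∈ slitPlane :=
  Or.inl (one_pos.trans_le (one_le_re_two_sub (norm_exp_two_pi_I_mul t).le))

noncomputable def alphaOneLift (k : ℤ) (t : ℝ) : ℂ :=
  Complex.I * (t + k - 1 / 2) - log (2 - exp (2 * π * Complex.I * t)) / (2 * π)

lemma continuous_alphaOneLift (k : ℤ) : Continuous (alphaOneLift k) := by
  have : Continuous fun t : ℝ => log (2 - exp (2 * π * Complex.I * t)) :=
    (by fun_prop : Continuous fun t : ℝ => 2 - exp (2 * π * Complex.I * t)).clog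
      two_sub_exp_mem_slitPlane
  unfold alphaOneLift
  fun_prop

lemma exp_two_pi_mul_alphaOneLift (k : ℤ) (t : ℝ) :
    exp (2 * π * alphaOneLift k t) = (alphaOne t + 1) / (alphaOne t - 1) := by
  have h : 2 * π * alphaOneLift k t =
      2 * π * Complex.I * t + k * (2 * π * Complex.I) - π * Complex.I
        - log (2 - exp (2 * π * Complex.I * t)) := by
    simp only [alphaOneLift]
    field_simp
  have hne := slitPlane_ne_zero (two_sub_exp_mem_slitPlane t)
  rw [h, exp_sub, exp_sub, exp_add, exp_int_mul_two_pi_mul_I, exp_pi_mul_I, exp_log hne,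
    alphaOne, show -1 + exp (2 * π * Complex.I * t) - 1 = -(2 - exp (2 * π * Complex.I * t)) by
      ring]
  field_simp
  ring

lemma alphaOneLift_notMem_intMulI (k : ℤ) (t : ℝ) : alphaOneLift k t ∉ intMulI :=
  notMem_intMulI_of_exp_eq (exp_two_pi_mul_alphaOneLift k t)

lemma fCov_alphaOneLift (k : ℤ) (t : ℝ) : fCov (alphaOneLift k t) = alphaOne t :=
  (fCov_eq_iff (alphaOneLift_notMem_intMulI k t) (alphaOne_ne_one t)).mpr
    (exp_two_pi_mul_alphaOneLift k t)

lemma alphaOneLift_zero (k : ℤ) : alphaOneLift k 0 = -Complex.I / 2 + Complex.I * k := by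
  simp only [alphaOneLift, ofReal_zero, mul_zero, exp_zero]
  norm_num
  ring

lemma alphaOneLift_one (k : ℤ) : alphaOneLift k 1 = -Complex.I / 2 + Complex.I * (k + 1) := by
  simp only [alphaOneLift, ofReal_one, mul_one, exp_two_pi_mul_I]
  norm_num
  ring

lemma re_alphaOneLift (k : ℤ) (t : ℝ) :
    (alphaOneLift k t).re = -(Real.log ‖2 - exp (2 * π * Complex.I * t)‖ / (2 * π)) := by
  rw [alphaOneLift, show (2 * π : ℂ) = ((2 * π : ℝ) : ℂ) by push_cast; ring, sub_re,
    div_ofReal_re, log_re]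
  simp

lemma re_alphaOneLift_nonpos (k : ℤ) (t : ℝ) : (alphaOneLift k t).re ≤ 0 := by
  have := Real.log_nonneg
    ((one_le_re_two_sub (norm_exp_two_pi_I_mul t).le).trans (re_le_norm _))
  rw [re_alphaOneLift, neg_nonpos]
  positivity

lemma re_alphaOneLift_neg (k : ℤ) {t : ℝ} (ht : exp (2 * π * Complex.I * t) ≠ 1) :
    (alphaOneLift k t).re < 0 := by
  have := Real.log_pos (one_lt_norm_two_sub (norm_exp_two_pi_I_mul t).le ht)
  rw [re_alphaOneLift, neg_neg_iff_pos]
  positivity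

lemma eq_zero_or_eq_one_of_re_alphaOneLift_eq_zero (k : ℤ) {t : ℝ} (ht : t ∈ I)
    (h : (alphaOneLift k t).re = 0) : t = 0 ∨ t = 1 := by
  by_contra hne
  exact (re_alphaOneLift_neg k (mt (exp_two_pi_I_mul_eq_one_iff ht).mp hne)).ne h

/-- For every `k ∈ ℤ`, the unique lift `γ` of `α₁` under `f = f₁ ∘ f₂` with initial point
`−i/2 + ik` exists, is unique, terminates at `−i/2 + i(k+1)`, has image in the closed left
half-plane, and meets the imaginary axis only at its endpoints. -/
theorem lift_of_alpha_one (k : ℤ) :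
    ∃ γ : I → ℂ,
      (Continuous γ ∧ (∀ t : I, γ t ∉ intMulI) ∧
        (∀ t : I, fCov (γ t) = alphaOne (t : ℝ)) ∧
        γ 0 = -Complex.I / 2 + Complex.I * (k : ℂ)) ∧
      (∀ γ' : I → ℂ,
        (Continuous γ' ∧ (∀ t : I, γ' t ∉ intMulI) ∧
          (∀ t : I, fCov (γ' t) = alphaOne (t : ℝ)) ∧
          γ' 0 = -Complex.I / 2 + Complex.I * (k : ℂ)) → γ' = γ) ∧
      γ 1 = -Complex.I / 2 + Complex.I * ((k : ℂ) + 1) ∧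
      (∀ t : I, (γ t).re ≤ 0) ∧
      (∀ t : I, (γ t).re = 0 → t = 0 ∨ t = 1) := by
  have hcont : Continuous fun t : I => alphaOneLift k t :=
    (continuous_alphaOneLift k).comp continuous_subtype_val
  refine ⟨fun t => alphaOneLift k t,
    ⟨hcont, fun t => alphaOneLift_notMem_intMulI k t, fun t => fCov_alphaOneLift k t,
      alphaOneLift_zero k⟩,
    fun γ' ⟨hc, hno, hcov, h₀⟩ => ?_, alphaOneLift_one k, fun t => re_alphaOneLift_nonpos k t,
    fun t ht =>
      (eq_zero_or_eq_one_of_re_alphaOneLift_eq_zero k t.2 ht).imp Subtype.ext Subtype.ext⟩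
  refine eq_of_exp_two_pi_mul_eq hc hcont (fun t => ?_) 0 (h₀.trans (alphaOneLift_zero k).symm)
  rw [(fCov_eq_iff (hno t) (alphaOne_ne_one t)).mp (hcov t), exp_two_pi_mul_alphaOneLift]
end

section
/- Let R₁ = {z ∈ ℂ : x₁ < Re z < x₂, y₁ < Im z < y₂} and R₂ = {z ∈ ℂ : p₁ < Re z < p₂, q₁ < Im z < q₂} be open axis-parallel rectangles, and let S₂ = {z ∈ ℂ : p₁ ≤ Re z ≤ p₂} be the closed vertical strip bounded by the prolongations of the vertical sides of R₂. Suppose f is continuous on the closure of R₁, holomorphic on R₁, takes values in S₂, and its boundary values map the two horizontal sides of R₁ into the two different closed horizontal sides of R₂ (i.e. f maps {z : Im z = y₁, x₁ ≤ Re z ≤ x₂} into [p₁,p₂] × {q₁} and {z : Im z = y₂, x₁ ≤ Re z ≤ x₂} into [p₁,p₂] × {q₂}, or vice versa). Then λ(R₁) ≥ λ(R₂), i.e. (y₂ − y₁)/(x₂ − x₁) ≥ (q₂ − q₁)/(p₂ − p₁). -/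
open Complex

/-- The open axis-parallel rectangle `{z : x₁ < Re z < x₂, y₁ < Im z < y₂}`. -/
def openRect (x₁ x₂ y₁ y₂ : ℝ) : Set ℂ :=
  {z : ℂ | x₁ < z.re ∧ z.re < x₂ ∧ y₁ < z.im ∧ z.im < y₂}

/-- The closed horizontal segment `[p₁,p₂] × {q}`. -/
def horizSeg (p₁ p₂ q : ℝ) : Set ℂ :=
  {z : ℂ | p₁ ≤ z.re ∧ z.re ≤ p₂ ∧ z.im = q}

/-- The closed vertical strip `{z : p₁ ≤ Re z ≤ p₂}`. -/
def vertStrip (p₁ p₂ : ℝ) : Set ℂ := {z : ℂ | p₁ ≤ z.re ∧ z.re ≤ p₂}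

/-- If a holomorphic map of the rectangle `R₁` into the vertical strip determined by the
rectangle `R₂` maps the two horizontal sides of `R₁` into the two different horizontal sides
of `R₂`, then `λ(R₁) ≥ λ(R₂)`. -/
theorem extremal_length_rectangle_lemma
    (x₁ x₂ y₁ y₂ p₁ p₂ q₁ q₂ : ℝ)
    (hx : x₁ < x₂) (hy : y₁ < y₂) (hp : p₁ < p₂) (hq : q₁ < q₂)
    (f : ℂ → ℂ)
    (hc : ContinuousOn f (closure (openRect x₁ x₂ y₁ y₂)))
    (hd : DifferentiableOn ℂ f (openRect x₁ x₂ y₁ y₂))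
    (hS : Set.MapsTo f (closure (openRect x₁ x₂ y₁ y₂)) (vertStrip p₁ p₂))
    (hsides :
      (Set.MapsTo f (horizSeg x₁ x₂ y₁) (horizSeg p₁ p₂ q₁) ∧
        Set.MapsTo f (horizSeg x₁ x₂ y₂) (horizSeg p₁ p₂ q₂)) ∨
      (Set.MapsTo f (horizSeg x₁ x₂ y₁) (horizSeg p₁ p₂ q₂) ∧
        Set.MapsTo f (horizSeg x₁ x₂ y₂) (horizSeg p₁ p₂ q₁))) :
    (y₂ - y₁) / (x₂ - x₁) ≥ (q₂ - q₁) / (p₂ - p₁) := by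
  have hx' : x₁ ≤ x₂ := hx.le
  have hy' : y₁ ≤ y₂ := hy.le
  have hrect : openRect x₁ x₂ y₁ y₂ = Set.Ioo x₁ x₂ ×ℂ Set.Ioo y₁ y₂ := by
    ext z
    simp only [openRect, Set.mem_setOf_eq, Complex.mem_reProdIm, Set.mem_Ioo]
    tauto
  have hclos : closure (openRect x₁ x₂ y₁ y₂) = Set.Icc x₁ x₂ ×ℂ Set.Icc y₁ y₂ := by
    rw [hrect, Complex.closure_reProdIm, closure_Ioo hx.ne, closure_Ioo hy.ne]
  have hmem : ∀ x ∈ Set.Icc x₁ x₂, ∀ y ∈ Set.Icc y₁ y₂,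
      (x : ℂ) + y * I ∈ closure (openRect x₁ x₂ y₁ y₂) := by
    intro x hx0 y hy0
    rw [hclos]
    rw [Complex.mem_reProdIm]
    constructor <;> simp [hx0, hy0]
  -- continuity of the four boundary restrictions
  have cbot : ContinuousOn (fun x : ℝ => f ((x : ℂ) + y₁ * I)) (Set.Icc x₁ x₂) :=
    hc.comp (by fun_prop) (fun x hx0 => hmem x hx0 y₁ (Set.left_mem_Icc.2 hy'))
  have ctop : ContinuousOn (fun x : ℝ => f ((x : ℂ) + y₂ * I)) (Set.Icc x₁ x₂) :=
    hc.comp (by fun_prop) (fun x hx0 => hmem x hx0 y₂ (Set.right_mem_Icc.2 hy'))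
  have cleft : ContinuousOn (fun y : ℝ => f ((x₁ : ℂ) + y * I)) (Set.Icc y₁ y₂) :=
    hc.comp (by fun_prop) (fun y hy0 => hmem x₁ (Set.left_mem_Icc.2 hx') y hy0)
  have cright : ContinuousOn (fun y : ℝ => f ((x₂ : ℂ) + y * I)) (Set.Icc y₁ y₂) :=
    hc.comp (by fun_prop) (fun y hy0 => hmem x₂ (Set.right_mem_Icc.2 hx') y hy0)
  have ibot : IntervalIntegrable (fun x : ℝ => f ((x : ℂ) + y₁ * I)) MeasureTheory.volume x₁ x₂ :=
    (cbot.mono (by rw [Set.uIcc_of_le hx'])).intervalIntegrable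
  have itop : IntervalIntegrable (fun x : ℝ => f ((x : ℂ) + y₂ * I)) MeasureTheory.volume x₁ x₂ :=
    (ctop.mono (by rw [Set.uIcc_of_le hx'])).intervalIntegrable
  have ileft : IntervalIntegrable (fun y : ℝ => f ((x₁ : ℂ) + y * I)) MeasureTheory.volume y₁ y₂ :=
    (cleft.mono (by rw [Set.uIcc_of_le hy'])).intervalIntegrable
  have iright : IntervalIntegrable (fun y : ℝ => f ((x₂ : ℂ) + y * I)) MeasureTheory.volume y₁ y₂ :=
    (cright.mono (by rw [Set.uIcc_of_le hy'])).intervalIntegrable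
  -- Cauchy's theorem on the rectangle
  have key := Complex.integral_boundary_rect_eq_zero_of_continuousOn_of_differentiableOn f
      ((x₁ : ℂ) + y₁ * I) ((x₂ : ℂ) + y₂ * I) ?_ ?_
  rotate_left
  · simp only [Complex.add_re, Complex.add_im, Complex.ofReal_re, Complex.ofReal_im,
      Complex.mul_re, Complex.mul_im, Complex.I_re, Complex.I_im, mul_zero, mul_one,
      zero_mul, sub_zero, zero_add, add_zero]
    rw [Set.uIcc_of_le hx', Set.uIcc_of_le hy', ← hclos]
    exact hc
  · simp only [Complex.add_re, Complex.add_im, Complex.ofReal_re, Complex.ofReal_im,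
      Complex.mul_re, Complex.mul_im, Complex.I_re, Complex.I_im, mul_zero, mul_one,
      zero_mul, sub_zero, zero_add, add_zero]
    rw [min_eq_left hx', max_eq_right hx', min_eq_left hy', max_eq_right hy', ← hrect]
    exact hd
  simp only [Complex.add_re, Complex.add_im, Complex.ofReal_re, Complex.ofReal_im,
      Complex.mul_re, Complex.mul_im, Complex.I_re, Complex.I_im, mul_zero, mul_one,
      zero_mul, sub_zero, zero_add, add_zero] at key
  -- take imaginary parts
  have him := congrArg Complex.im key
  have e1 : (∫ x : ℝ in x₁..x₂, f ((x : ℂ) + y₁ * I)).im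
      = ∫ x : ℝ in x₁..x₂, (f ((x : ℂ) + y₁ * I)).im :=
    (Complex.imCLM.intervalIntegral_comp_comm ibot).symm
  have e2 : (∫ x : ℝ in x₁..x₂, f ((x : ℂ) + y₂ * I)).im
      = ∫ x : ℝ in x₁..x₂, (f ((x : ℂ) + y₂ * I)).im :=
    (Complex.imCLM.intervalIntegral_comp_comm itop).symm
  have e3 : (∫ y : ℝ in y₁..y₂, f ((x₂ : ℂ) + y * I)).re
      = ∫ y : ℝ in y₁..y₂, (f ((x₂ : ℂ) + y * I)).re :=
    (Complex.reCLM.intervalIntegral_comp_comm iright).symm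
  have e4 : (∫ y : ℝ in y₁..y₂, f ((x₁ : ℂ) + y * I)).re
      = ∫ y : ℝ in y₁..y₂, (f ((x₁ : ℂ) + y * I)).re :=
    (Complex.reCLM.intervalIntegral_comp_comm ileft).symm
  rw [Complex.sub_im, Complex.add_im, Complex.sub_im, Complex.zero_im] at him
  rw [smul_eq_mul, smul_eq_mul, Complex.mul_im, Complex.mul_im, Complex.I_re, Complex.I_im] at him
  simp only [zero_mul, one_mul, zero_add] at him
  rw [e1, e2, e3, e4] at him
  -- boundary values of Re f on the vertical sides
  have hreB : ∀ x₀, x₀ ∈ Set.Icc x₁ x₂ →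
      ∀ y ∈ Set.Icc y₁ y₂, p₁ ≤ (f ((x₀ : ℂ) + y * I)).re ∧ (f ((x₀ : ℂ) + y * I)).re ≤ p₂ := by
    intro x₀ hx0 y hy0
    exact hS (hmem x₀ hx0 y hy0)
  have icleft : IntervalIntegrable (fun y : ℝ => (f ((x₁ : ℂ) + y * I)).re)
      MeasureTheory.volume y₁ y₂ := by
    have := (Complex.continuous_re.comp_continuousOn cleft)
    exact (this.mono (by rw [Set.uIcc_of_le hy'])).intervalIntegrable
  have icright : IntervalIntegrable (fun y : ℝ => (f ((x₂ : ℂ) + y * I)).re)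
      MeasureTheory.volume y₁ y₂ := by
    have := (Complex.continuous_re.comp_continuousOn cright)
    exact (this.mono (by rw [Set.uIcc_of_le hy'])).intervalIntegrable
  have hconst : ∀ c : ℝ, (∫ _ : ℝ in y₁..y₂, c) = (y₂ - y₁) * c := by
    intro c; rw [intervalIntegral.integral_const]; exact smul_eq_mul ..
  have hBub : (∫ y : ℝ in y₁..y₂, (f ((x₂ : ℂ) + y * I)).re) ≤ (y₂ - y₁) * p₂ := by
    rw [← hconst p₂]
    exact intervalIntegral.integral_mono_on hy' icright intervalIntegrable_const
      (fun y hy0 => (hreB x₂ (Set.right_mem_Icc.2 hx') y hy0).2)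
  have hBlb : (y₂ - y₁) * p₁ ≤ (∫ y : ℝ in y₁..y₂, (f ((x₁ : ℂ) + y * I)).re) := by
    rw [← hconst p₁]
    exact intervalIntegral.integral_mono_on hy' intervalIntegrable_const icleft
      (fun y hy0 => (hreB x₁ (Set.left_mem_Icc.2 hx') y hy0).1)
  have hBub' : (∫ y : ℝ in y₁..y₂, (f ((x₁ : ℂ) + y * I)).re) ≤ (y₂ - y₁) * p₂ := by
    rw [← hconst p₂]
    exact intervalIntegral.integral_mono_on hy' icleft intervalIntegrable_const
      (fun y hy0 => (hreB x₁ (Set.left_mem_Icc.2 hx') y hy0).2)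
  have hBlb' : (y₂ - y₁) * p₁ ≤ (∫ y : ℝ in y₁..y₂, (f ((x₂ : ℂ) + y * I)).re) := by
    rw [← hconst p₁]
    exact intervalIntegral.integral_mono_on hy' intervalIntegrable_const icright
      (fun y hy0 => (hreB x₂ (Set.right_mem_Icc.2 hx') y hy0).1)
  -- the horizontal-side integrals are constants
  have hmemseg : ∀ y₀ : ℝ, ∀ x ∈ Set.Icc x₁ x₂, ((x : ℂ) + y₀ * I) ∈ horizSeg x₁ x₂ y₀ := by
    intro y₀ x hx0
    refine ⟨?_, ?_, ?_⟩ <;> simp [hx0.1, hx0.2]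
  have hAconst : ∀ (y₀ q : ℝ), Set.MapsTo f (horizSeg x₁ x₂ y₀) (horizSeg p₁ p₂ q) →
      (∫ x : ℝ in x₁..x₂, (f ((x : ℂ) + y₀ * I)).im) = (x₂ - x₁) * q := by
    intro y₀ q hmap
    rw [intervalIntegral.integral_congr (g := fun _ => q), intervalIntegral.integral_const,
      smul_eq_mul]
    intro x hx0
    rw [Set.uIcc_of_le hx'] at hx0
    exact (hmap (hmemseg y₀ x hx0)).2.2
  -- conclude
  have hkey : (q₂ - q₁) * (x₂ - x₁) ≤ (p₂ - p₁) * (y₂ - y₁) := by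
    rcases hsides with ⟨h1, h2⟩ | ⟨h1, h2⟩
    · rw [hAconst y₁ q₁ h1, hAconst y₂ q₂ h2] at him
      nlinarith [hBub, hBlb]
    · rw [hAconst y₁ q₂ h1, hAconst y₂ q₁ h2] at him
      nlinarith [hBub', hBlb']
  rw [ge_iff_le, div_le_div_iff₀ (by linarith) (by linarith)]
  nlinarith [hkey]
end

section
/- For M > 0 define A(M) = ∫₀^M dt/√((M² − t²)((M+1)² − t²)) and B(M) = ∫_M^{M+1} dt/√((t² − M²)((M+1)² − t²)) (both integrals are finite and positive). Then there exist positive constants c and C, independent of M, such that for all M ≥ 1/2: c·log(1 + M) ≤ A(M)/B(M) ≤ C·log(1 + M). -/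
open Real MeasureTheory

/-- `A(M) = ∫₀^M dt/√((M² − t²)((M+1)² − t²))`. -/
noncomputable def ellipticA (M : ℝ) : ℝ :=
  ∫ t in Set.Ioo (0 : ℝ) M,
    1 / Real.sqrt ((M ^ 2 - t ^ 2) * ((M + 1) ^ 2 - t ^ 2))

/-- `B(M) = ∫_M^{M+1} dt/√((t² − M²)((M+1)² − t²))`. -/
noncomputable def ellipticB (M : ℝ) : ℝ :=
  ∫ t in Set.Ioo M (M + 1),
    1 / Real.sqrt ((t ^ 2 - M ^ 2) * ((M + 1) ^ 2 - t ^ 2))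

/-!
On `(0, M)` the integrand of `A` lies between `1 / (2 (M + 1) (M + 1 - t))` and
`2 / (M √(M - t) (1 + √(M - t)))`, whose integrals are `log (1 + M) / (2 (M + 1))` and
`4 log (1 + √M) / M`. On `(M, M + 1)` the two factors under the root of `B` sum to `2M + 1`,
so by AM-GM the integrand is at least `2 / (2M + 1)`; and it is at most
`(1 / √(t - M) + 1 / √(M + 1 - t)) / (2M)`, whose integral is `2 / M`. Hence for `M ≥ 1/2`
both `M · A(M) / log (1 + M)` and `M · B(M)` are bounded above and below by absolute constants.
-/

open Set

section Comparison

variable {f g G : ℝ → ℝ} {a b : ℝ}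

theorem integral_Ioo_eq_sub_of_hasDerivAt_of_nonneg (hab : a ≤ b)
    (hG : ContinuousOn G (Icc a b)) (hG' : ∀ x ∈ Ioo a b, HasDerivAt G (g x) x)
    (hg : ∀ x ∈ Ioo a b, 0 ≤ g x) :
    IntegrableOn g (Ioo a b) ∧ ∫ x in Ioo a b, g x = G b - G a := by
  have hint : IntegrableOn g (Ioc a b) := intervalIntegral.integrableOn_deriv_of_nonneg hG hG' hg
  refine ⟨hint.mono_set Ioo_subset_Ioc_self, ?_⟩
  rw [← integral_Ioc_eq_integral_Ioo, ← intervalIntegral.integral_of_le hab]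
  exact intervalIntegral.integral_eq_sub_of_hasDerivAt_of_le hab hG hG'
    ((intervalIntegrable_iff_integrableOn_Ioc_of_le hab).2 hint)

theorem integrableOn_Ioo_and_integral_le_sub_of_le_deriv (hab : a ≤ b)
    (hG : ContinuousOn G (Icc a b)) (hG' : ∀ x ∈ Ioo a b, HasDerivAt G (g x) x)
    (hf : AEStronglyMeasurable f (volume.restrict (Ioo a b)))
    (hf₀ : ∀ x ∈ Ioo a b, 0 ≤ f x) (hfg : ∀ x ∈ Ioo a b, f x ≤ g x) :
    IntegrableOn f (Ioo a b) ∧ ∫ x in Ioo a b, f x ≤ G b - G a := by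
  obtain ⟨hgint, hgG⟩ := integral_Ioo_eq_sub_of_hasDerivAt_of_nonneg hab hG hG'
    fun x hx => (hf₀ x hx).trans (hfg x hx)
  have hfint : IntegrableOn f (Ioo a b) := hgint.mono' hf <|
    (ae_restrict_iff' measurableSet_Ioo).2 <| .of_forall fun x hx => by
      rw [norm_of_nonneg (hf₀ x hx)]; exact hfg x hx
  exact ⟨hfint, hgG ▸ setIntegral_mono_on hfint hgint measurableSet_Ioo hfg⟩

theorem sub_le_integral_Ioo_of_deriv_le (hab : a ≤ b)
    (hG : ContinuousOn G (Icc a b)) (hG' : ∀ x ∈ Ioo a b, HasDerivAt G (g x) x)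
    (hg : ∀ x ∈ Ioo a b, 0 ≤ g x) (hf : IntegrableOn f (Ioo a b))
    (hgf : ∀ x ∈ Ioo a b, g x ≤ f x) :
    G b - G a ≤ ∫ x in Ioo a b, f x := by
  obtain ⟨hgint, hgG⟩ := integral_Ioo_eq_sub_of_hasDerivAt_of_nonneg hab hG hG' hg
  exact hgG ▸ setIntegral_mono_on hgint hf measurableSet_Ioo hgf

end Comparison

theorem one_le_sqrt_add_sqrt_of_add_eq_one {a b : ℝ} (ha : 0 ≤ a) (hb : 0 ≤ b)
    (hab : a + b = 1) :
    1 ≤ √a + √b := by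
  have : a ≤ √a := le_sqrt_self_iff.2 (by linarith)
  have : b ≤ √b := le_sqrt_self_iff.2 (by linarith)
  linarith

theorem log_one_add_sqrt_le_two_mul_log_one_add {M : ℝ} (hM : 1 / 4 ≤ M) :
    log (1 + √M) ≤ 2 * log (1 + M) := by
  have hsqrt : √M ≤ 2 * M := sqrt_le_iff.2 ⟨by linarith, by nlinarith⟩
  calc log (1 + √M) ≤ log ((1 + M) ^ 2) := log_le_log (by positivity) (by nlinarith)
    _ = 2 * log (1 + M) := by rw [log_pow]; norm_num

theorem hasDerivAt_log_one_add_sqrt_sub {c x : ℝ} (hx : x < c) :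
    HasDerivAt (fun t => log (1 + √(c - t))) (-(1 / (2 * √(c - x) * (1 + √(c - x))))) x := by
  have hs : 0 < √(c - x) := sqrt_pos.2 (by linarith)
  have h := ((((hasDerivAt_id' x).const_sub c).sqrt (by linarith)).const_add 1).log
    (by positivity)
  exact h.congr_deriv (by field_simp)

theorem hasDerivAt_sqrt_sub_sub_sqrt_sub {a b x : ℝ} (ha : a < x) (hb : x < b) :
    HasDerivAt (fun t => √(t - a) - √(b - t)) ((1 / √(x - a) + 1 / √(b - x)) / 2) x := by
  have h := (((hasDerivAt_id' x).sub_const a).sqrt (by linarith)).sub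
    (((hasDerivAt_id' x).const_sub b).sqrt (by linarith))
  exact h.congr_deriv (by ring)

section Integrands

variable {M t : ℝ}

theorem one_div_le_one_div_sqrt_ellipticA (ht : 0 ≤ t) (htM : t < M) :
    1 / (2 * (M + 1) * (M + 1 - t)) ≤ 1 / √((M ^ 2 - t ^ 2) * ((M + 1) ^ 2 - t ^ 2)) := by
  have h₁ : 0 < M ^ 2 - t ^ 2 := by nlinarith
  have h₂ : M ^ 2 - t ^ 2 ≤ (M + 1) ^ 2 - t ^ 2 := by nlinarith
  have h₃ : (M + 1) ^ 2 - t ^ 2 ≤ 2 * (M + 1) * (M + 1 - t) := by nlinarith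
  refine one_div_le_one_div_of_le (sqrt_pos.2 (by nlinarith)) (sqrt_le_iff.2 ⟨by nlinarith, ?_⟩)
  calc (M ^ 2 - t ^ 2) * ((M + 1) ^ 2 - t ^ 2) ≤ ((M + 1) ^ 2 - t ^ 2) ^ 2 := by
        rw [sq ((M + 1) ^ 2 - t ^ 2)]; exact mul_le_mul_of_nonneg_right h₂ (h₁.le.trans h₂)
    _ ≤ (2 * (M + 1) * (M + 1 - t)) ^ 2 := pow_le_pow_left₀ (h₁.le.trans h₂) h₃ 2

theorem one_div_sqrt_ellipticA_le (hM : 0 < M) (ht : 0 ≤ t) (htM : t < M) :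
    1 / √((M ^ 2 - t ^ 2) * ((M + 1) ^ 2 - t ^ 2)) ≤
      2 / (M * √(M - t) * (1 + √(M - t))) := by
  set s := √(M - t)
  have hs : s ^ 2 = M - t := sq_sqrt (by linarith)
  have hs₀ : 0 < s := sqrt_pos.2 (by linarith)
  have hprod : M ^ 2 * (s ^ 2 * (1 + s ^ 2)) ≤ (M ^ 2 - t ^ 2) * ((M + 1) ^ 2 - t ^ 2) := by
    rw [hs]
    have h₁ : M * (M - t) ≤ M ^ 2 - t ^ 2 := by nlinarith
    have h₂ : M * (1 + (M - t)) ≤ (M + 1) ^ 2 - t ^ 2 := by nlinarith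
    nlinarith [mul_le_mul h₁ h₂ (by nlinarith) (by nlinarith)]
  have hsq : (M * s * (1 + s) / 2) ^ 2 ≤ M ^ 2 * (s ^ 2 * (1 + s ^ 2)) := by
    have : (1 + s) ^ 2 ≤ 4 * (1 + s ^ 2) := by nlinarith [sq_nonneg (1 - s)]
    calc (M * s * (1 + s) / 2) ^ 2 = M ^ 2 * s ^ 2 * (1 + s) ^ 2 / 4 := by ring
      _ ≤ M ^ 2 * s ^ 2 * (4 * (1 + s ^ 2)) / 4 := by gcongr
      _ = M ^ 2 * (s ^ 2 * (1 + s ^ 2)) := by ring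
  refine (one_div_le_one_div_of_le (by positivity) ?_).trans_eq (one_div_div _ _)
  exact (le_sqrt (by positivity) ((by positivity : (0 : ℝ) ≤ _).trans hprod)).2
    (hsq.trans hprod)

theorem two_div_le_one_div_sqrt_ellipticB (hM : 0 ≤ 2 * M + 1)
    (hP : 0 < (t ^ 2 - M ^ 2) * ((M + 1) ^ 2 - t ^ 2)) :
    2 / (2 * M + 1) ≤ 1 / √((t ^ 2 - M ^ 2) * ((M + 1) ^ 2 - t ^ 2)) := by
  rw [← one_div_div]
  refine one_div_le_one_div_of_le (sqrt_pos.2 hP) (sqrt_le_iff.2 ⟨by positivity, ?_⟩)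
  nlinarith [sq_nonneg ((t ^ 2 - M ^ 2) - ((M + 1) ^ 2 - t ^ 2))]

theorem one_div_sqrt_ellipticB_le (hM : 0 < M) (ht : M < t) (htM : t < M + 1) :
    1 / √((t ^ 2 - M ^ 2) * ((M + 1) ^ 2 - t ^ 2)) ≤
      (1 / √(t - M) + 1 / √(M + 1 - t)) / (2 * M) := by
  have ha : 0 < √(t - M) := sqrt_pos.2 (by linarith)
  have hb : 0 < √(M + 1 - t) := sqrt_pos.2 (by linarith)
  have hprod : 2 * M * (√(t - M) * √(M + 1 - t)) ≤
      √((t ^ 2 - M ^ 2) * ((M + 1) ^ 2 - t ^ 2)) := by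
    rw [← sqrt_mul (by linarith), ← sqrt_sq (by positivity : 0 ≤ 2 * M),
      ← sqrt_mul (by positivity)]
    apply sqrt_le_sqrt
    have h₁ : 2 * M * (t - M) ≤ t ^ 2 - M ^ 2 := by nlinarith
    have h₂ : 2 * M * (M + 1 - t) ≤ (M + 1) ^ 2 - t ^ 2 := by nlinarith
    nlinarith [mul_le_mul h₁ h₂ (by nlinarith) (by nlinarith)]
  have hsum : 1 ≤ √(t - M) + √(M + 1 - t) :=
    one_le_sqrt_add_sqrt_of_add_eq_one (by linarith) (by linarith) (by ring)
  calc 1 / √((t ^ 2 - M ^ 2) * ((M + 1) ^ 2 - t ^ 2))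
      ≤ 1 / (2 * M * (√(t - M) * √(M + 1 - t))) :=
        one_div_le_one_div_of_le (by positivity) hprod
    _ ≤ (√(t - M) + √(M + 1 - t)) / (2 * M * (√(t - M) * √(M + 1 - t))) := by gcongr
    _ = (1 / √(t - M) + 1 / √(M + 1 - t)) / (2 * M) := by field_simp; ring

end Integrands

section Bounds

variable {M : ℝ}

theorem ellipticA_bounds (hM : 0 < M) :
    log (1 + M) / (2 * (M + 1)) ≤ ellipticA M ∧ ellipticA M ≤ 4 * log (1 + √M) / M := by
  obtain ⟨hint, hle⟩ := integrableOn_Ioo_and_integral_le_sub_of_le_deriv hM.le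
    (G := fun t => -(4 / M) * log (1 + √(M - t)))
    (ContinuousOn.mul continuousOn_const <| ContinuousOn.log (by fun_prop)
      fun x _ => by positivity)
    (fun x hx => ((hasDerivAt_log_one_add_sqrt_sub hx.2).const_mul (-(4 / M))).congr_deriv <| by
      have : 0 < √(M - x) := sqrt_pos.2 (sub_pos.2 hx.2)
      field_simp; norm_num)
    (by fun_prop : Measurable _).aestronglyMeasurable (fun _ _ => by positivity)
    (fun x hx => one_div_sqrt_ellipticA_le hM hx.1.le hx.2)
  have hge := sub_le_integral_Ioo_of_deriv_le hM.le
      (G := fun t => -log (M + 1 - t) / (2 * (M + 1)))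
      (ContinuousOn.div_const (ContinuousOn.neg <| ContinuousOn.log (by fun_prop)
        fun x hx => by linarith [hx.2]) _)
      (fun x hx => by
        have h := (((hasDerivAt_id' x).const_sub (M + 1)).log (by linarith [hx.2])).neg.div_const
          (2 * (M + 1))
        exact h.congr_deriv (by field_simp))
      (fun x hx => by
        have : 0 < M + 1 - x := by linarith [hx.2]
        positivity) hint
      (fun x hx => one_div_le_one_div_sqrt_ellipticA hx.1.le hx.2)
  rw [ellipticA]
  refine ⟨le_of_eq_of_le ?_ hge, hle.trans_eq ?_⟩
  · simp [add_comm 1 M]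
    ring
  · simp
    ring

theorem ellipticB_bounds (hM : 0 < M) :
    2 / (2 * M + 1) ≤ ellipticB M ∧ ellipticB M ≤ 2 / M := by
  have hMM : M ≤ M + 1 := by linarith
  have h2M : 0 < 2 * M + 1 := by linarith
  obtain ⟨hint, hle⟩ := integrableOn_Ioo_and_integral_le_sub_of_le_deriv hMM
    (G := fun t => (√(t - M) - √(M + 1 - t)) / M) (by fun_prop)
    (fun x hx => ((hasDerivAt_sqrt_sub_sub_sqrt_sub hx.1 hx.2).div_const M).congr_deriv (by ring))
    (by fun_prop : Measurable _).aestronglyMeasurable (fun _ _ => by positivity)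
    (fun x hx => one_div_sqrt_ellipticB_le hM hx.1 hx.2)
  have hge := sub_le_integral_Ioo_of_deriv_le hMM
    (G := fun t => 2 * t / (2 * M + 1)) (by fun_prop)
    (fun x _ => (((hasDerivAt_id' x).const_mul 2).div_const _).congr_deriv (by ring))
    (fun _ _ => by positivity) hint
    (fun x hx => two_div_le_one_div_sqrt_ellipticB h2M.le <|
      mul_pos (by nlinarith [hx.1]) (by nlinarith [hx.1, hx.2]))
  rw [ellipticB]
  refine ⟨le_of_eq_of_le ?_ hge, hle.trans_eq ?_⟩
  · ring
  · simp
    ring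

end Bounds

/-- There are positive constants `c`, `C` independent of `M` such that for all `M ≥ 1/2`
the extremal length `A(M)/B(M)` of the rectangle associated with the elliptic integral
satisfies `c·log(1+M) ≤ A(M)/B(M) ≤ C·log(1+M)`. -/
theorem elliptic_extremal_length_log_bounds :
    ∃ c C : ℝ, 0 < c ∧ 0 < C ∧
      ∀ M : ℝ, 1 / 2 ≤ M →
        c * Real.log (1 + M) ≤ ellipticA M / ellipticB M ∧
        ellipticA M / ellipticB M ≤ C * Real.log (1 + M) := by
  refine ⟨1 / 12, 16, by norm_num, by norm_num, fun M hM => ?_⟩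
  have hM₀ : 0 < M := by linarith
  obtain ⟨hA₁, hA₂⟩ := ellipticA_bounds hM₀
  obtain ⟨hB₁, hB₂⟩ := ellipticB_bounds hM₀
  have hL : 0 ≤ log (1 + M) := log_nonneg (by linarith)
  have hA : 4 * log (1 + √M) / M ≤ 8 * log (1 + M) / M := by
    have := log_one_add_sqrt_le_two_mul_log_one_add (by linarith : 1 / 4 ≤ M)
    exact div_le_div_of_nonneg_right (by linarith) hM₀.le
  have hB : 0 < ellipticB M := (by positivity : (0 : ℝ) < 2 / (2 * M + 1)).trans_le hB₁
  constructor
  · calc 1 / 12 * log (1 + M) ≤ log (1 + M) / (2 * (M + 1)) / (2 / M) := by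
          field_simp
          nlinarith
      _ ≤ ellipticA M / ellipticB M :=
          div_le_div₀ ((by positivity : (0 : ℝ) ≤ _).trans hA₁) hA₁ hB hB₂
  · calc ellipticA M / ellipticB M ≤ 8 * log (1 + M) / M / (2 / (2 * M + 1)) :=
          div_le_div₀ (by positivity) (hA₂.trans hA) (by positivity) hB₁
      _ ≤ 16 * log (1 + M) := by
          field_simp
          nlinarith
end

section
/- Let k ∈ ℤ and let γ be an elementary slalom curve in ℂ \ iℤ whose endpoints lie in the two adjacent components (ik, i(k+1)) and (i(k+1), i(k+2)) of iℝ \ iℤ (so |k − ℓ| = 1 in the notation above). Then the extremal length of γ equals 0. -/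
open Complex unitInterval

/-- The set `iℝ \ iℤ`. -/
def imAxisPunctured : Set ℂ := {z : ℂ | z.re = 0 ∧ z ∉ intMulI}

/-- An elementary slalom curve with initial point in the component `(ik, i(k+1))` and
terminal point in the component `(iℓ, i(ℓ+1))` of `iℝ \ iℤ`: an injective curve in
`ℂ \ iℤ` whose interior is contained in one of the open half-planes `{Re z > 0}`,
`{Re z < 0}`. -/
def ElementarySlalom (k l : ℤ) (γ : I → ℂ) : Prop :=
  Continuous γ ∧ Function.Injective γ ∧ (∀ t : I, γ t ∉ intMulI) ∧
  (γ 0).re = 0 ∧ (k : ℝ) < (γ 0).im ∧ (γ 0).im < (k : ℝ) + 1 ∧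
  (γ 1).re = 0 ∧ (l : ℝ) < (γ 1).im ∧ (γ 1).im < (l : ℝ) + 1 ∧
  ((∀ t : I, t ≠ 0 → t ≠ 1 → 0 < (γ t).re) ∨
    (∀ t : I, t ≠ 0 → t ≠ 1 → (γ t).re < 0))

/-- A side function `g : I → ℂ` represents the curve `γ` if it is homotopic to `γ`
through curves in `ℂ \ iℤ` whose endpoints stay in `iℝ \ iℤ`. -/
def SideRepresentsCurve (γ g : I → ℂ) : Prop :=
  ∃ H : I × I → ℂ, Continuous H ∧
    (∀ p : I × I, H p ∉ intMulI) ∧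
    (∀ t : I, H (0, t) = g t) ∧ (∀ t : I, H (1, t) = γ t) ∧
    (∀ s : I, H (s, 0) ∈ imAxisPunctured) ∧ (∀ s : I, H (s, 1) ∈ imAxisPunctured)

/-- A map, continuous on the closed rectangle, holomorphic inside, with values in `ℂ \ iℤ`,
represents the curve `γ` if it maps the horizontal sides into `iℝ \ iℤ` and each vertical
side, as a curve with endpoints in `iℝ \ iℤ`, represents `γ`. -/
def RepresentsCurveOnRect (γ : I → ℂ) (x₁ x₂ y₁ y₂ : ℝ) : Prop :=
  ∃ f : ℂ → ℂ,
    ContinuousOn f (closure (openRect x₁ x₂ y₁ y₂)) ∧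
    DifferentiableOn ℂ f (openRect x₁ x₂ y₁ y₂) ∧
    (∀ z ∈ closure (openRect x₁ x₂ y₁ y₂), f z ∉ intMulI) ∧
    (∀ x ∈ Set.Icc x₁ x₂,
      f ((x : ℂ) + (y₁ : ℂ) * Complex.I) ∈ imAxisPunctured ∧
        f ((x : ℂ) + (y₂ : ℂ) * Complex.I) ∈ imAxisPunctured) ∧
    SideRepresentsCurve γ
      (fun t => f ((x₁ : ℂ) + ((y₁ + (t : ℝ) * (y₂ - y₁) : ℝ) : ℂ) * Complex.I)) ∧
    SideRepresentsCurve γ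
      (fun t => f ((x₂ : ℂ) + ((y₁ + (t : ℝ) * (y₂ - y₁) : ℝ) : ℂ) * Complex.I))

/-- The extremal length of the (homotopy class of the) curve `γ`: the infimum of the
extremal lengths `(y₂−y₁)/(x₂−x₁)` of rectangles admitting a representing map. -/
noncomputable def curveExtremalLength (γ : I → ℂ) : ℝ :=
  sInf {l : ℝ | ∃ x₁ x₂ y₁ y₂ : ℝ, x₁ < x₂ ∧ y₁ < y₂ ∧
    l = (y₂ - y₁) / (x₂ - x₁) ∧ RepresentsCurveOnRect γ x₁ x₂ y₁ y₂}

lemma fre (c r b : ℝ) (z : ℂ) :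
    ((c:ℂ) * Complex.I + (r:ℂ) * (Complex.I * Complex.exp ((b:ℂ) * z))).re
      = -(r * (Real.exp (b * z.re) * Real.sin (b * z.im))) := by
  simp [Complex.exp_re, Complex.exp_im, Complex.mul_re, Complex.mul_im]

lemma fim (c r b : ℝ) (z : ℂ) :
    ((c:ℂ) * Complex.I + (r:ℂ) * (Complex.I * Complex.exp ((b:ℂ) * z))).im
      = c + r * (Real.exp (b * z.re) * Real.cos (b * z.im)) := by
  simp [Complex.exp_re, Complex.exp_im, Complex.mul_re, Complex.mul_im]

lemma sin_sgn (sg y : ℝ) (hs : sg = 1 ∨ sg = -1) :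
    Real.sin (sg * y) = sg * Real.sin y := by
  rcases hs with h | h <;> subst h <;> simp

lemma convex_pos {a b s : ℝ} (hs0 : 0 ≤ s) (hs1 : s ≤ 1)
    (ha : 0 < a) (hb : 0 < b) : 0 < (1-s)*a + s*b := by
  rcases lt_or_ge s 1 with h | h
  · have h1 := mul_pos (by linarith : (0:ℝ) < 1 - s) ha
    have h2 := mul_nonneg hs0 hb.le
    linarith
  · have : s = 1 := le_antisymm hs1 h
    subst this; simpa using hb

lemma convexIoo' {l u a b s : ℝ} (hs0 : 0 ≤ s) (hs1 : s ≤ 1)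
    (ha1 : l < a) (ha2 : a < u) (hb1 : l < b) (hb2 : b < u) :
    l < (1-s)*a + s*b ∧ (1-s)*a + s*b < u := by
  have h1 := convex_pos hs0 hs1 (by linarith : (0:ℝ) < a - l) (by linarith : (0:ℝ) < b - l)
  have h2 := convex_pos hs0 hs1 (by linarith : (0:ℝ) < u - a) (by linarith : (0:ℝ) < u - b)
  constructor <;> nlinarith

/-- a real number at distance in (0,1) from the integer k+1 is not an integer -/
lemma nonint_center (k : ℤ) (c : ℝ) (h1 : 0 < |c|) (h2 : |c| < 1) :
    ∀ m : ℤ, (k:ℝ) + 1 + c ≠ (m:ℝ) := by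
  intro m hm
  have hc : ((m - (k+1) : ℤ) : ℝ) = c := by push_cast; linarith
  rw [← hc, ← Int.cast_abs] at h1 h2
  have h1' : 0 < |m - (k+1)| := by exact_mod_cast h1
  have h2' : |m - (k+1)| < 1 := by exact_mod_cast h2
  omega

lemma dl_int (dl c : ℝ) (hdl : dl = 1 ∨ dl = -1) (h1 : 0 < c) (h2 : c < 1) :
    (dl-1)/2 < dl*c ∧ dl*c < (dl+1)/2 := by
  rcases hdl with h | h <;> subst h <;> constructor <;> linarith

lemma abs_dl (dl c : ℝ) (hdl : dl = 1 ∨ dl = -1)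
    (h1 : (dl-1)/2 < c) (h2 : c < (dl+1)/2) : 0 < |c| ∧ |c| < 1 := by
  rcases hdl with h | h <;> subst h <;>
    rcases abs_cases c with ⟨he, hs⟩ | ⟨he, hs⟩ <;> rw [he] <;> constructor <;> linarith

set_option maxHeartbeats 1000000 in
lemma cos_sgn (sg y : ℝ) (hs : sg = 1 ∨ sg = -1) :
    Real.cos (sg * y) = Real.cos y := by
  rcases hs with h | h <;> subst h <;> simp

set_option maxHeartbeats 1000000 in
lemma main_rep (k : ℤ) (γ : I → ℂ) (dl sg : ℝ)
    (hdl : dl = 1 ∨ dl = -1) (hsg : sg = 1 ∨ sg = -1)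
    (hcont : Continuous γ)
    (hre0 : (γ 0).re = 0) (hre1 : (γ 1).re = 0)
    (him0l : (k:ℝ)+1+(dl-1)/2 < (γ 0).im) (him0u : (γ 0).im < (k:ℝ)+1+(dl+1)/2)
    (him1l : (k:ℝ)+1+(-dl-1)/2 < (γ 1).im) (him1u : (γ 1).im < (k:ℝ)+1+(-dl+1)/2)
    (hmid : ∀ t : I, t ≠ 0 → t ≠ 1 → 0 < (-(dl*sg)) * (γ t).re)
    (N : ℝ) (hN : 1 ≤ N) :
    RepresentsCurveOnRect γ 0 N 0 1 := by
  have hπ := Real.pi_pos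
  set ε : ℝ := Real.exp (-(Real.pi*N))/2 with hε_def
  have hε : 0 < ε := by positivity
  set b : ℝ := sg * Real.pi with hb_def
  set f : ℂ → ℂ := fun z => (((k:ℝ)+1 : ℝ):ℂ) * Complex.I
      + ((dl*ε : ℝ):ℂ) * (Complex.I * Complex.exp ((b:ℂ) * z)) with hf_def
  have hdl2 : dl * dl = 1 := by rcases hdl with h|h <;> subst h <;> norm_num
  have hsg2 : sg * sg = 1 := by rcases hsg with h|h <;> subst h <;> norm_num
  have hh : (dl*sg)*(dl*sg) = 1 := by linear_combination (sg*sg) * hdl2 + hsg2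
  have hre : ∀ z : ℂ, (f z).re
      = -(dl*sg) * (ε * Real.exp (b * z.re)) * Real.sin (Real.pi * z.im) := by
    intro z
    rw [hf_def]
    simp only
    rw [fre]
    have e1 : b * z.im = sg * (Real.pi * z.im) := by rw [hb_def]; ring
    rw [e1, sin_sgn sg _ hsg]
    ring
  have him : ∀ z : ℂ, (f z).im
      = ((k:ℝ)+1) + dl * ((ε * Real.exp (b * z.re)) * Real.cos (Real.pi * z.im)) := by
    intro z
    rw [hf_def]
    simp only
    rw [fim]
    have e1 : b * z.im = sg * (Real.pi * z.im) := by rw [hb_def]; ring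
    rw [e1, cos_sgn sg _ hsg]
    ring
  have hE : ∀ x : ℝ, 0 ≤ x → x ≤ N →
      0 < ε * Real.exp (b * x) ∧ ε * Real.exp (b * x) < 1 := by
    intro x hx0 hxN
    have hbx : b * x ≤ Real.pi * N := by
      rcases hsg with h|h <;> rw [hb_def, h] <;> nlinarith
    refine ⟨by positivity, ?_⟩
    have e1 : ε * Real.exp (b*x) = Real.exp (b*x - Real.pi*N) / 2 := by
      rw [hε_def, Real.exp_sub, Real.exp_neg]; ring
    rw [e1]
    have h1 : Real.exp (b*x - Real.pi*N) ≤ 1 := Real.exp_le_one_iff.mpr (by linarith)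
    linarith
  -- f avoids iℤ on the closed box
  have hbox : ∀ z : ℂ, 0 ≤ z.re → z.re ≤ N → 0 ≤ z.im → z.im ≤ 1 → f z ∉ intMulI := by
    intro z h1 h2 h3 h4 hmem
    obtain ⟨m, hm⟩ := hmem
    have hmre : (f z).re = 0 := by rw [hm]; simp
    have hmim : (f z).im = (m:ℝ) := by rw [hm]; simp
    obtain ⟨hEpos, hElt⟩ := hE z.re h1 h2
    rw [hre] at hmre
    have hsin : Real.sin (Real.pi * z.im) = 0 := by
      rcases mul_eq_zero.mp hmre with h | h
      · exfalso
        rcases mul_eq_zero.mp h with h' | h'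
        · rcases hdl with h''|h'' <;> rcases hsg with h'''|h''' <;>
            rw [h'', h'''] at h' <;> norm_num at h'
        · rw [h'] at hEpos; exact lt_irrefl 0 hEpos
      · exact h
    have hy : z.im = 0 ∨ z.im = 1 := by
      by_contra hcon
      push_neg at hcon
      have h5 : 0 < z.im := lt_of_le_of_ne h3 (Ne.symm hcon.1)
      have h6 : z.im < 1 := lt_of_le_of_ne h4 hcon.2
      have := Real.sin_pos_of_pos_of_lt_pi (mul_pos hπ h5)
        (by nlinarith : Real.pi * z.im < Real.pi)
      linarith
    have himz := him z
    rw [hmim] at himz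
    rcases hy with hy | hy
    · rw [hy] at himz
      simp only [mul_zero, Real.cos_zero, mul_one] at himz
      refine nonint_center k (dl * (ε * Real.exp (b * z.re))) ?_ ?_ m himz.symm
      · rw [abs_mul]
        rcases hdl with h|h <;> rw [h] <;>
          simp [abs_of_pos hEpos] <;> exact hEpos
      · rw [abs_mul]
        rcases hdl with h|h <;> rw [h] <;> simp [abs_of_pos hEpos] <;> linarith
    · rw [hy] at himz
      simp only [mul_one, Real.cos_pi] at himz
      have himz' : (m:ℝ) = (k:ℝ)+1 + (-(dl * (ε * Real.exp (b * z.re)))) := by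
        rw [himz]; ring
      refine nonint_center k (-(dl * (ε * Real.exp (b * z.re)))) ?_ ?_ m himz'.symm
      · rw [abs_neg, abs_mul]
        rcases hdl with h|h <;> rw [h] <;>
          simp [abs_of_pos hEpos] <;> exact hEpos
      · rw [abs_neg, abs_mul]
        rcases hdl with h|h <;> rw [h] <;> simp [abs_of_pos hEpos] <;> linarith
  have hcl : closure (openRect 0 N 0 1) ⊆
      {z : ℂ | 0 ≤ z.re ∧ z.re ≤ N ∧ 0 ≤ z.im ∧ z.im ≤ 1} := by
    apply closure_minimal
    · rintro z ⟨h1,h2,h3,h4⟩; exact ⟨h1.le, h2.le, h3.le, h4.le⟩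
    · have e1 : {z : ℂ | 0 ≤ z.re ∧ z.re ≤ N ∧ 0 ≤ z.im ∧ z.im ≤ 1}
          = (Complex.re ⁻¹' Set.Icc 0 N) ∩ (Complex.im ⁻¹' Set.Icc 0 1) := by
        ext z; simp only [Set.mem_setOf_eq, Set.mem_inter_iff, Set.mem_preimage,
          Set.mem_Icc]; tauto
      rw [e1]
      exact (isClosed_Icc.preimage Complex.continuous_re).inter
        (isClosed_Icc.preimage Complex.continuous_im)
  have hfc : Continuous f := by
    rw [hf_def]; fun_prop
  have hfd : Differentiable ℂ f := by
    rw [hf_def]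
    apply Differentiable.add (differentiable_const _)
    apply Differentiable.mul (differentiable_const _)
    apply Differentiable.mul (differentiable_const _)
    exact Complex.differentiable_exp.comp (differentiable_id.const_mul _)
  -- the vertical sides represent γ
  have side : ∀ x : ℝ, 0 ≤ x → x ≤ N →
      SideRepresentsCurve γ
        (fun t : I => f ((x:ℂ) + ((0 + (t:ℝ)*(1-0) : ℝ):ℂ) * Complex.I)) := by
    intro x hx0 hxN
    obtain ⟨hEpos, hElt⟩ := hE x hx0 hxN
    set g : I → ℂ := fun t : I =>
      f ((x:ℂ) + ((0 + (t:ℝ)*(1-0) : ℝ):ℂ) * Complex.I) with hg_def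
    have harg : ∀ t : I, ((x:ℂ) + ((0 + (t:ℝ)*(1-0) : ℝ):ℂ) * Complex.I)
        = (x:ℂ) + ((t:ℝ):ℂ) * Complex.I := by intro t; norm_num
    have hzre : ∀ t : I, ((x:ℂ) + ((t:ℝ):ℂ) * Complex.I).re = x := by intro t; simp
    have hzim : ∀ t : I, ((x:ℂ) + ((t:ℝ):ℂ) * Complex.I).im = (t:ℝ) := by
      intro t; simp
    have hgre : ∀ t : I, (g t).re
        = -(dl*sg) * (ε * Real.exp (b * x)) * Real.sin (Real.pi * (t:ℝ)) := by
      intro t; rw [hg_def]; simp only; rw [harg t, hre, hzre, hzim]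
    have hgim : ∀ t : I, (g t).im
        = ((k:ℝ)+1) + dl * ((ε * Real.exp (b * x)) * Real.cos (Real.pi * (t:ℝ))) := by
      intro t; rw [hg_def]; simp only; rw [harg t, him, hzre, hzim]
    have hc0 : ((0:I):ℝ) = 0 := rfl
    have hc1 : ((1:I):ℝ) = 1 := rfl
    have hg0re : (g 0).re = 0 := by rw [hgre 0, hc0]; simp
    have hg1re : (g 1).re = 0 := by rw [hgre 1, hc1]; simp [Real.sin_pi]
    have hg0im : (g 0).im = ((k:ℝ)+1) + dl * (ε * Real.exp (b * x)) := by
      rw [hgim 0, hc0]; simp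
    have hg1im : (g 1).im = ((k:ℝ)+1) + (-dl) * (ε * Real.exp (b * x)) := by
      rw [hgim 1, hc1]; simp [Real.cos_pi]; try ring
    obtain ⟨hd0l, hd0u⟩ := dl_int dl (ε * Real.exp (b * x)) hdl hEpos hElt
    obtain ⟨hd1l, hd1u⟩ := dl_int (-dl) (ε * Real.exp (b * x))
      (by rcases hdl with h|h <;> rw [h] <;> norm_num) hEpos hElt
    set H : I × I → ℂ := fun p =>
      ((1 - (p.1:ℝ) : ℝ):ℂ) * g p.2 + (((p.1:ℝ) : ℝ):ℂ) * γ p.2 with hH_def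
    have hHre : ∀ p : I × I, (H p).re
        = (1 - (p.1:ℝ)) * (g p.2).re + (p.1:ℝ) * (γ p.2).re := by
      intro p; rw [hH_def]; simp [Complex.re_ofReal_mul]
    have hHim : ∀ p : I × I, (H p).im
        = (1 - (p.1:ℝ)) * (g p.2).im + (p.1:ℝ) * (γ p.2).im := by
      intro p; rw [hH_def]; simp [Complex.im_ofReal_mul]
    -- endpoints of the homotopy stay in the punctured axis
    have hend0 : ∀ s : I, H (s, 0) ∈ imAxisPunctured := by
      intro s
      have hio : (k:ℝ)+1+(dl-1)/2 < (H (s,0)).im ∧ (H (s,0)).im < (k:ℝ)+1+(dl+1)/2 := by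
        rw [hHim]
        exact convexIoo' s.2.1 s.2.2 (by rw [hg0im]; linarith) (by rw [hg0im]; linarith)
          him0l him0u
      refine ⟨by rw [hHre]; simp [hg0re, hre0], ?_⟩
      rintro ⟨m, hm⟩
      have hmim : (H (s,0)).im = (m:ℝ) := by rw [hm]; simp
      obtain ⟨ha1, ha2⟩ := abs_dl dl ((H (s,0)).im - ((k:ℝ)+1)) hdl
        (by linarith [hio.1]) (by linarith [hio.2])
      exact nonint_center k ((H (s,0)).im - ((k:ℝ)+1)) ha1 ha2 m (by linarith)
    have hend1 : ∀ s : I, H (s, 1) ∈ imAxisPunctured := by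
      intro s
      have hio : (k:ℝ)+1+(-dl-1)/2 < (H (s,1)).im ∧ (H (s,1)).im < (k:ℝ)+1+(-dl+1)/2 := by
        rw [hHim]
        exact convexIoo' s.2.1 s.2.2 (by rw [hg1im]; linarith) (by rw [hg1im]; linarith)
          him1l him1u
      refine ⟨by rw [hHre]; simp [hg1re, hre1], ?_⟩
      rintro ⟨m, hm⟩
      have hmim : (H (s,1)).im = (m:ℝ) := by rw [hm]; simp
      obtain ⟨ha1, ha2⟩ := abs_dl (-dl) ((H (s,1)).im - ((k:ℝ)+1))
        (by rcases hdl with h|h <;> rw [h] <;> norm_num)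
        (by linarith [hio.1]) (by linarith [hio.2])
      exact nonint_center k ((H (s,1)).im - ((k:ℝ)+1)) ha1 ha2 m (by linarith)
    refine ⟨H, ?_, ?_, ?_, ?_, hend0, hend1⟩
    · -- continuity
      rw [hH_def]
      have hgc : Continuous g := by
        rw [hg_def]
        exact hfc.comp (by fun_prop)
      fun_prop
    · -- avoids iℤ
      rintro ⟨s, t⟩ ⟨m, hm⟩
      rcases eq_or_ne t 0 with rfl | ht0
      · exact (hend0 s).2 ⟨m, hm⟩
      rcases eq_or_ne t 1 with rfl | ht1
      · exact (hend1 s).2 ⟨m, hm⟩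
      have ht0' : 0 < (t:ℝ) := lt_of_le_of_ne t.2.1 (Ne.symm (unitInterval.coe_ne_zero.mpr ht0))
      have ht1' : (t:ℝ) < 1 := lt_of_le_of_ne t.2.2 (unitInterval.coe_ne_one.mpr ht1)
      have hsinp : 0 < Real.sin (Real.pi * (t:ℝ)) :=
        Real.sin_pos_of_pos_of_lt_pi (mul_pos hπ ht0')
          (by nlinarith : Real.pi * (t:ℝ) < Real.pi)
      have h2 : (-(dl*sg)) * (H (s,t)).re
          = (1 - (s:ℝ)) * ((ε * Real.exp (b * x)) * Real.sin (Real.pi * (t:ℝ)))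
            + (s:ℝ) * ((-(dl*sg)) * (γ t).re) := by
        rw [hHre, hgre]
        linear_combination ((1 - (s:ℝ)) * ((ε * Real.exp (b * x))
          * Real.sin (Real.pi * (t:ℝ)))) * hh
      have h3 : 0 < (-(dl*sg)) * (H (s,t)).re := by
        rw [h2]
        exact convex_pos s.2.1 s.2.2 (mul_pos hEpos hsinp) (hmid t ht0 ht1)
      have h4 : (H (s,t)).re = 0 := by rw [hm]; simp
      rw [h4, mul_zero] at h3
      exact lt_irrefl 0 h3
    · -- H (0, t) = g t
      intro t
      rw [hH_def]
      simp
    · -- H (1, t) = γ t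
      intro t
      rw [hH_def]
      simp
  -- assemble
  refine ⟨f, hfc.continuousOn, hfd.differentiableOn, ?_, ?_, ?_, ?_⟩
  · intro z hz
    obtain ⟨h1, h2, h3, h4⟩ := hcl hz
    exact hbox z h1 h2 h3 h4
  · intro x hx
    obtain ⟨hx0, hxN⟩ := hx
    have hb0 : ((x:ℂ) + ((0:ℝ):ℂ) * Complex.I) = (x:ℂ) + ((0:ℝ):ℂ) * Complex.I := rfl
    constructor
    · refine ⟨?_, ?_⟩
      · rw [hre]; simp
      · apply hbox <;> simp [hx0, hxN]
    · refine ⟨?_, ?_⟩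
      · rw [hre]; simp [Real.sin_pi]
      · apply hbox <;> simp [hx0, hxN]
  · exact side 0 le_rfl (by linarith)
  · exact side N (by linarith) le_rfl

set_option maxHeartbeats 1000000 in
/-- An elementary slalom curve whose endpoints lie in two adjacent components
`(ik, i(k+1))` and `(i(k+1), i(k+2))` of `iℝ \ iℤ` has extremal length `0`. -/
theorem elementary_slalom_adjacent_extremal_length_zero
    (k : ℤ) (γ : I → ℂ)
    (h : ElementarySlalom k (k + 1) γ ∨ ElementarySlalom (k + 1) k γ) :
    curveExtremalLength γ = 0 := by
  have key : ∀ N : ℝ, 1 ≤ N → RepresentsCurveOnRect γ 0 N 0 1 := by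
    intro N hN
    rcases h with hE | hE <;>
      obtain ⟨hc, -, -, hre0, h0l, h0u, hre1, h1l, h1u, hside⟩ := hE <;>
      rcases hside with hs | hs
    · exact main_rep k γ (-1) 1 (Or.inr rfl) (Or.inl rfl) hc hre0 hre1
        (by push_cast at h0l ⊢; linarith) (by push_cast at h0u ⊢; linarith)
        (by push_cast at h1l ⊢; linarith) (by push_cast at h1u ⊢; linarith)
        (fun t a b => by simpa using hs t a b) N hN
    · exact main_rep k γ (-1) (-1) (Or.inr rfl) (Or.inr rfl) hc hre0 hre1
        (by push_cast at h0l ⊢; linarith) (by push_cast at h0u ⊢; linarith)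
        (by push_cast at h1l ⊢; linarith) (by push_cast at h1u ⊢; linarith)
        (fun t a b => by simpa using hs t a b) N hN
    · exact main_rep k γ 1 (-1) (Or.inl rfl) (Or.inr rfl) hc hre0 hre1
        (by push_cast at h0l ⊢; linarith) (by push_cast at h0u ⊢; linarith)
        (by push_cast at h1l ⊢; linarith) (by push_cast at h1u ⊢; linarith)
        (fun t a b => by simpa using hs t a b) N hN
    · exact main_rep k γ 1 1 (Or.inl rfl) (Or.inl rfl) hc hre0 hre1
        (by push_cast at h0l ⊢; linarith) (by push_cast at h0u ⊢; linarith)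
        (by push_cast at h1l ⊢; linarith) (by push_cast at h1u ⊢; linarith)
        (fun t a b => by simpa using hs t a b) N hN
  unfold curveExtremalLength
  set S : Set ℝ := {l : ℝ | ∃ x₁ x₂ y₁ y₂ : ℝ, x₁ < x₂ ∧ y₁ < y₂ ∧
    l = (y₂ - y₁) / (x₂ - x₁) ∧ RepresentsCurveOnRect γ x₁ x₂ y₁ y₂} with hS_def
  have hmemS : ∀ n : ℕ, (1:ℝ)/(n+1) ∈ S := by
    intro n
    refine ⟨0, (n:ℝ)+1, 0, 1, by positivity, one_pos, by norm_num, ?_⟩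
    exact key ((n:ℝ)+1) (by have := Nat.cast_nonneg (α := ℝ) n; linarith)
  have hbdd : BddBelow S := by
    refine ⟨0, fun l hl => ?_⟩
    obtain ⟨x1, x2, y1, y2, hx, hy, hl, -⟩ := hl
    rw [hl]
    exact div_nonneg (by linarith) (by linarith)
  have hne : S.Nonempty := ⟨(1:ℝ)/((0:ℕ)+1), hmemS 0⟩
  apply le_antisymm
  · by_contra hlt
    push_neg at hlt
    obtain ⟨n, hn⟩ := exists_nat_one_div_lt hlt
    have := csInf_le hbdd (hmemS n)
    linarith
  · exact le_csInf hne fun l hl => by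
      obtain ⟨x1, x2, y1, y2, hx, hy, hl', -⟩ := hl
      rw [hl']
      exact div_nonneg (by linarith) (by linarith)
end
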